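/- Let w ≥ 2 and Q ≥ 2, and let p be a prime. Then ∑_{Q<q,q'≤2Q, p∣q} (q_s,q_s')/(qq') ≪ (log w)/p, where (q_s,q_s') denotes the gcd of the w-smooth parts of q and q'. -/

import Mathlib

open Finset

/-- The largest `w`-smooth divisor of `q` (its `w`-smooth part). -/
noncomputable def smoothPart (w : ℝ) (q : ℕ) : ℕ :=
  ∏ p ∈ q.primeFactors.filter (fun p : ℕ => (p : ℝ) ≤ w), p ^ q.factorization p

lemma prodPrimePow_dvd {t : Finset ℕ} {e : ℕ → ℕ} {m : ℕ}
    (ht : ∀ p ∈ t, p.Prime) (h : ∀ p ∈ t, p ^ e p ∣ m) :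
    (∏ p ∈ t, p ^ e p) ∣ m := by
  induction t using Finset.cons_induction with
  | empty => simpa using one_dvd m
  | cons a s ha ih =>
    rw [Finset.prod_cons]
    refine Nat.Coprime.mul_dvd_of_dvd_of_dvd ?_ (h a (mem_cons_self a s)) ?_
    · refine Nat.Coprime.pow_left _ ?_
      refine Nat.Coprime.prod_right fun q hq => Nat.Coprime.pow_right _ ?_
      exact (Nat.coprime_primes (ht a (mem_cons_self a s)) (ht q (mem_cons.2 (Or.inr hq)))).2
        (fun hh => ha (hh ▸ hq))
    · exact ih (fun p hp => ht p (mem_cons.2 (Or.inr hp))) (fun p hp => h p (mem_cons.2 (Or.inr hp)))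

lemma smoothPart_dvd (w : ℝ) (q : ℕ) : smoothPart w q ∣ q := by
  refine prodPrimePow_dvd (fun p hp => (Nat.mem_primeFactors.1 (mem_filter.1 hp).1).1) ?_
  exact fun p hp => Nat.ordProj_dvd q p

lemma smoothPart_pos (w : ℝ) (q : ℕ) : 0 < smoothPart w q := by
  refine Finset.prod_pos fun p hp => pow_pos ?_ _
  exact (Nat.mem_primeFactors.1 (mem_filter.1 hp).1).1.pos

lemma dvd_smoothPart_of (w : ℝ) {q d : ℕ} (hq : q ≠ 0) (hdq : d ∣ q)
    (hsm : ∀ r ∈ d.primeFactors, (r : ℝ) ≤ w) : d ∣ smoothPart w q := by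
  have hd0 : d ≠ 0 := fun h => hq (zero_dvd_iff.1 (h ▸ hdq))
  have hsp0 : smoothPart w q ≠ 0 := (smoothPart_pos w q).ne'
  rw [← Nat.factorization_le_iff_dvd hd0 hsp0]
  rw [Finsupp.le_iff]
  intro r hr
  rw [Nat.support_factorization] at hr
  have hrq : r ∈ q.primeFactors := Nat.primeFactors_mono hdq hq hr
  have hrp : r.Prime := Nat.prime_of_mem_primeFactors hr
  -- factorization of the product at r
  have hfac : (smoothPart w q).factorization =
      ∑ p ∈ q.primeFactors.filter (fun p : ℕ => (p : ℝ) ≤ w), (p ^ q.factorization p).factorization := by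
    exact Nat.factorization_prod (fun p hp =>
      pow_ne_zero _ (Nat.mem_primeFactors.1 (mem_filter.1 hp).1).1.pos.ne')
  rw [smoothPart] at hfac ⊢
  rw [hfac]
  rw [Finset.sum_apply']
  have hmem : r ∈ q.primeFactors.filter (fun p : ℕ => (p : ℝ) ≤ w) :=
    mem_filter.2 ⟨hrq, hsm r hr⟩
  calc d.factorization r ≤ q.factorization r :=
        (Nat.factorization_le_iff_dvd hd0 hq).2 hdq r
    _ = ∑ p ∈ q.primeFactors.filter (fun p : ℕ => (p : ℝ) ≤ w),
          ((p ^ q.factorization p).factorization) r := by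
        rw [Finset.sum_eq_single_of_mem r hmem]
        · rw [(Nat.prime_of_mem_primeFactors hrq).factorization_pow, Finsupp.single_apply, if_pos rfl]
        · intro b hb hbr
          rw [(Nat.prime_of_mem_primeFactors (mem_filter.1 hb).1).factorization_pow,
            Finsupp.single_apply, if_neg hbr]

lemma smooth_of_dvd_smoothPart (w : ℝ) {q d : ℕ} (hdq : d ∣ smoothPart w q) :
    ∀ r ∈ d.primeFactors, (r : ℝ) ≤ w := by
  intro r hr
  have hrp : r.Prime := Nat.prime_of_mem_primeFactors hr
  have hrd : r ∣ smoothPart w q := (Nat.dvd_of_mem_primeFactors hr).trans hdq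
  rw [smoothPart] at hrd
  obtain ⟨p, hp, hrp2⟩ := hrp.prime.exists_mem_finset_dvd hrd
  have := hrp.dvd_of_dvd_pow hrp2
  have hp' := mem_filter.1 hp
  have : r = p := ((Nat.prime_dvd_prime_iff_eq hrp (Nat.mem_primeFactors.1 hp'.1).1).1 this)
  exact this ▸ hp'.2

lemma gcd_smoothPart_eq_sum (w : ℝ) {q q' B : ℕ} (hq : q ≠ 0) (hq' : q' ≠ 0) (hB : q ≤ B) :
    (Nat.gcd (smoothPart w q) (smoothPart w q') : ℕ) =
      ∑ d ∈ (Finset.Icc 1 B).filter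
        (fun d => (d ∣ q ∧ d ∣ q') ∧ ∀ r ∈ d.primeFactors, (r : ℝ) ≤ w), Nat.totient d := by
  set g := Nat.gcd (smoothPart w q) (smoothPart w q') with hg
  have hg0 : g ≠ 0 := Nat.gcd_ne_zero_left (smoothPart_pos w q).ne'
  have hdiv : g.divisors = (Finset.Icc 1 B).filter
      (fun d => (d ∣ q ∧ d ∣ q') ∧ ∀ r ∈ d.primeFactors, (r : ℝ) ≤ w) := by
    ext d
    simp only [Nat.mem_divisors, mem_filter, Finset.mem_Icc]
    constructor
    · rintro ⟨hdg, -⟩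
      have hd1 : d ∣ smoothPart w q := hdg.trans (Nat.gcd_dvd_left _ _)
      have hd2 : d ∣ smoothPart w q' := hdg.trans (Nat.gcd_dvd_right _ _)
      have hdq : d ∣ q := hd1.trans (smoothPart_dvd w q)
      refine ⟨⟨Nat.one_le_iff_ne_zero.2 (fun h => hq (zero_dvd_iff.1 (h ▸ hdq))),
        (Nat.le_of_dvd (Nat.pos_of_ne_zero hq) hdq).trans hB⟩,
        ⟨hdq, hd2.trans (smoothPart_dvd w q')⟩, smooth_of_dvd_smoothPart w hd1⟩
    · rintro ⟨-, ⟨hdq, hdq'⟩, hsm⟩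
      exact ⟨Nat.dvd_gcd (dvd_smoothPart_of w hq hdq hsm) (dvd_smoothPart_of w hq' hdq' hsm), hg0⟩
  rw [← Nat.sum_totient g, hdiv]

lemma sum_inv_multiples_le (Q m : ℕ) (hQ : 1 ≤ Q) (hm : 1 ≤ m) :
    ∑ q ∈ (Finset.Ioc Q (2 * Q)).filter (fun q => m ∣ q), ((q : ℝ))⁻¹ ≤ (m : ℝ)⁻¹ := by
  set F := (Finset.Ioc Q (2 * Q)).filter (fun q => m ∣ q) with hF
  set k := Q / m with hk
  -- cardinality bound
  have hcard : F.card ≤ k + 1 := by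
    have h1 : (Finset.Ioc 0 (2 * Q)).filter (fun q => m ∣ q) =
        F ∪ (Finset.Ioc 0 Q).filter (fun q => m ∣ q) := by
      rw [hF, ← Finset.filter_union]
      congr 1
      rw [Finset.union_comm, Finset.Ioc_union_Ioc_eq_Ioc (Nat.zero_le Q) (by omega)]
    have h2 : ((Finset.Ioc 0 (2 * Q)).filter (fun q => m ∣ q)).card = 2 * Q / m :=
      Nat.Ioc_filter_dvd_card_eq_div _ _
    have h3 : ((Finset.Ioc 0 Q).filter (fun q => m ∣ q)).card = Q / m :=
      Nat.Ioc_filter_dvd_card_eq_div _ _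
    have h4 : 2 * Q / m ≤ 2 * k + 1 := by
      have : 2 * Q < (2 * k + 2) * m := by
        have h0 : m * k + Q % m = Q := Nat.div_add_mod Q m
        have h1 : Q % m < m := Nat.mod_lt _ (by omega)
        nlinarith [h0, h1]
      have := (Nat.div_lt_iff_lt_mul (show 0 < m by omega)).2 this
      omega
    have h5 := Finset.card_union_le F ((Finset.Ioc 0 Q).filter (fun q => m ∣ q))
    have h6 : F.card + ((Finset.Ioc 0 Q).filter (fun q => m ∣ q)).card
        = ((Finset.Ioc 0 (2*Q)).filter (fun q => m ∣ q)).card := by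
      rw [h1]
      rw [Finset.card_union_of_disjoint]
      refine Finset.disjoint_filter_filter ?_
      simp only [Finset.disjoint_left, Finset.mem_Ioc]
      rintro x ⟨hx1, -⟩ ⟨-, hx2⟩
      omega
    omega
  -- each element is at least m * (k+1)
  have helt : ∀ q ∈ F, (m * (k + 1) : ℝ) ≤ (q : ℝ) := by
    intro q hq
    rw [hF, mem_filter, Finset.mem_Ioc] at hq
    obtain ⟨⟨hq1, hq2⟩, hq3⟩ := hq
    have : k < q / m := Nat.div_lt_div_of_lt_of_dvd hq3 hq1
    have : m * (k + 1) ≤ m * (q / m) := Nat.mul_le_mul_left m (by omega)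
    have hqq : m * (q / m) = q := Nat.mul_div_cancel' hq3
    have : m * (k + 1) ≤ q := by omega
    exact_mod_cast this
  have hpos : (0:ℝ) < m * (k + 1) := by positivity
  calc ∑ q ∈ F, ((q : ℝ))⁻¹ ≤ ∑ q ∈ F, ((m * (k+1) : ℝ))⁻¹ := by
        refine Finset.sum_le_sum fun q hq => ?_
        exact inv_anti₀ hpos (helt q hq)
    _ = F.card * ((m * (k+1) : ℝ))⁻¹ := by rw [Finset.sum_const, nsmul_eq_mul]
    _ ≤ (k + 1 : ℝ) * ((m * (k+1) : ℝ))⁻¹ := by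
        refine mul_le_mul_of_nonneg_right ?_ (by positivity)
        exact_mod_cast hcard
    _ = (m : ℝ)⁻¹ := by
        field_simp

lemma primesBelow_eq (n : ℕ) : Nat.primesBelow (n+1) = Finset.filter Nat.Prime (Finset.range (n+1)) := rfl

lemma theta_bound (n : ℕ) :
    ∑ p ∈ Nat.primesBelow (n+1), Real.log p ≤ n * Real.log 4 := by
  have h1 : (primorial n : ℝ) = ∏ p ∈ Nat.primesBelow (n+1), (p : ℝ) := by
    rw [primorial, primesBelow_eq, Nat.cast_prod]
  have h2 : ∑ p ∈ Nat.primesBelow (n+1), Real.log p = Real.log (primorial n) := by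
    rw [h1, Real.log_prod]
    intro p hp
    exact_mod_cast (Nat.prime_of_mem_primesBelow hp).pos.ne'
  rw [h2]
  calc Real.log (primorial n) ≤ Real.log ((4:ℕ) ^ n) := by
        apply Real.log_le_log (by exact_mod_cast primorial_pos n)
        exact_mod_cast primorial_le_4_pow n
    _ = n * Real.log 4 := by
        push_cast
        rw [Real.log_pow]

lemma pow_div_dvd_factorial {p n : ℕ} (hp : p.Prime) : p ^ (n / p) ∣ n.factorial := by
  rw [Nat.Prime.pow_dvd_factorial_iff hp (Nat.lt_succ_self (Nat.log p n))]
  rcases le_or_gt p n with h | h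
  · have h1 : 1 ∈ Finset.Ico 1 (Nat.log p n + 1) := by
      simp only [Finset.mem_Ico]
      exact ⟨le_refl 1, by have := Nat.log_pos hp.one_lt h; omega⟩
    calc n / p = n / p ^ 1 := by rw [pow_one]
      _ ≤ ∑ i ∈ Finset.Ico 1 (Nat.log p n + 1), n / p ^ i :=
        Finset.single_le_sum (f := fun i => n / p ^ i) (fun i _ => Nat.zero_le _) h1
  · have : n / p = 0 := Nat.div_eq_of_lt h
    simp [this]

lemma mertens_first (n : ℕ) (hn : 2 ≤ n) :
    ∑ p ∈ Nat.primesBelow (n+1), Real.log p / p ≤ Real.log n + Real.log 4 := by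
  set P := Nat.primesBelow (n+1) with hP
  have hprime : ∀ p ∈ P, p.Prime := fun p hp => Nat.prime_of_mem_primesBelow hp
  have hn0 : (0:ℝ) < n := by positivity
  -- key divisibility
  have hdvd : (∏ p ∈ P, p ^ (n / p)) ∣ n.factorial :=
    prodPrimePow_dvd hprime (fun p hp => pow_div_dvd_factorial (hprime p hp))
  have hle : ((∏ p ∈ P, p ^ (n / p) : ℕ) : ℝ) ≤ (n.factorial : ℝ) := by
    exact_mod_cast Nat.le_of_dvd (Nat.factorial_pos n) hdvd
  have hkey : ∑ p ∈ P, ((n / p : ℕ) : ℝ) * Real.log p ≤ n * Real.log n := by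
    have hlog1 : Real.log (∏ p ∈ P, p ^ (n / p) : ℕ) = ∑ p ∈ P, ((n / p : ℕ) : ℝ) * Real.log p := by
      push_cast
      rw [Real.log_prod]
      · refine Finset.sum_congr rfl fun p hp => ?_
        rw [Real.log_pow]
      · intro p hp
        exact (pow_pos (by exact_mod_cast (hprime p hp).pos) _).ne'
    have hlog2 : Real.log (n.factorial) ≤ n * Real.log n := by
      calc Real.log (n.factorial) ≤ Real.log ((n:ℕ) ^ n) := by
            apply Real.log_le_log (by exact_mod_cast Nat.factorial_pos n)
            exact_mod_cast Nat.factorial_le_pow n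
        _ = n * Real.log n := by push_cast; rw [Real.log_pow]
    calc ∑ p ∈ P, ((n / p : ℕ) : ℝ) * Real.log p
        = Real.log (∏ p ∈ P, p ^ (n / p) : ℕ) := hlog1.symm
      _ ≤ Real.log (n.factorial) := Real.log_le_log (by exact_mod_cast
            (Finset.prod_pos fun p hp => pow_pos (hprime p hp).pos _)) hle
      _ ≤ n * Real.log n := hlog2
  have htheta := theta_bound n
  -- pointwise: n * (log p / p) ≤ (↑(n/p) + 1) * log p
  have hpt : ∀ p ∈ P, (n:ℝ) * (Real.log p / p) ≤ (((n / p : ℕ) : ℝ) + 1) * Real.log p := by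
    intro p hp
    have hp2 : (0:ℝ) < p := by exact_mod_cast (hprime p hp).pos
    have hlogp : 0 ≤ Real.log p := Real.log_nonneg (by exact_mod_cast (hprime p hp).one_lt.le)
    have hdiv : (n:ℝ) ≤ (((n / p : ℕ) : ℝ) + 1) * p := by
      have h1 : n = p * (n / p) + n % p := (Nat.div_add_mod n p).symm
      have h2 : n % p < p := Nat.mod_lt _ (hprime p hp).pos
      have : (n:ℝ) = p * ((n / p : ℕ) : ℝ) + ((n % p : ℕ) : ℝ) := by exact_mod_cast h1
      rw [this]
      have : ((n % p : ℕ) : ℝ) ≤ p := by exact_mod_cast h2.le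
      nlinarith
    calc (n:ℝ) * (Real.log p / p) = (n / p) * Real.log p := by ring
      _ ≤ ((((n / p : ℕ) : ℝ) + 1) * p / p) * Real.log p := by
          apply mul_le_mul_of_nonneg_right _ hlogp
          exact div_le_div_of_nonneg_right hdiv hp2.le
      _ = (((n / p : ℕ) : ℝ) + 1) * Real.log p := by field_simp
  have hsum : (n:ℝ) * ∑ p ∈ P, Real.log p / p ≤ n * Real.log n + n * Real.log 4 := by
    rw [Finset.mul_sum]
    calc ∑ p ∈ P, (n:ℝ) * (Real.log p / p)
        ≤ ∑ p ∈ P, (((n / p : ℕ) : ℝ) + 1) * Real.log p := Finset.sum_le_sum hpt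
      _ = ∑ p ∈ P, ((n / p : ℕ) : ℝ) * Real.log p + ∑ p ∈ P, Real.log p := by
          rw [← Finset.sum_add_distrib]
          refine Finset.sum_congr rfl fun p hp => by ring
      _ ≤ n * Real.log n + n * Real.log 4 := add_le_add hkey htheta
  nlinarith [hsum, hn0]

lemma abel_identity (f g : ℕ → ℝ) (N : ℕ) (hN : 2 ≤ N) :
    ∑ n ∈ Finset.Icc 2 N, f n * g n =
      (∑ m ∈ Finset.Icc 2 N, f m) * g N +
        ∑ n ∈ Finset.Ico 2 N, (∑ m ∈ Finset.Icc 2 n, f m) * (g n - g (n+1)) := by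
  induction N, hN using Nat.le_induction with
  | base => simp
  | succ N hN ih =>
    rw [Finset.sum_Icc_succ_top (by omega : 2 ≤ N + 1), ih,
      Finset.sum_Ico_succ_top (by omega : 2 ≤ N),
      Finset.sum_Icc_succ_top (by omega : 2 ≤ N + 1)]
    ring

lemma integral_inv_mul_log (b : ℝ) (hb : 2 ≤ b) :
    ∫ t in (2:ℝ)..b, (t * Real.log t)⁻¹ =
      Real.log (Real.log b) - Real.log (Real.log 2) := by
  have hlog2 : (0:ℝ) < Real.log 2 := Real.log_pos (by norm_num)
  have hsub : Set.uIcc (2:ℝ) b ⊆ Set.Ici (2:ℝ) := by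
    rw [Set.uIcc_of_le hb]
    exact Set.Icc_subset_Ici_self
  have hderiv : ∀ t ∈ Set.uIcc (2:ℝ) b,
      HasDerivAt (fun x => Real.log (Real.log x)) ((t * Real.log t)⁻¹) t := by
    intro t ht
    have ht2 : 2 ≤ t := hsub ht
    have ht0 : t ≠ 0 := by linarith
    have hlt : Real.log t ≠ 0 := by
      have : Real.log 2 ≤ Real.log t := Real.log_le_log (by norm_num) ht2
      linarith
    have h1 : HasDerivAt Real.log t⁻¹ t := Real.hasDerivAt_log ht0
    have h2 := h1.log hlt
    convert h2 using 1
    rw [div_eq_mul_inv, mul_inv]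
  have hcont : ContinuousOn (fun t => (t * Real.log t)⁻¹) (Set.uIcc (2:ℝ) b) := by
    apply ContinuousOn.inv₀
    · exact (continuousOn_id.mul (Real.continuousOn_log.mono (fun x hx => by
        have : 2 ≤ x := hsub hx
        simp only [Set.mem_compl_iff, Set.mem_singleton_iff]
        intro h; rw [h] at this; norm_num at this)))
    · intro t ht
      have ht2 : 2 ≤ t := hsub ht
      have : Real.log 2 ≤ Real.log t := Real.log_le_log (by norm_num) ht2
      have : (0:ℝ) < t * Real.log t := by nlinarith
      exact this.ne'
  exact intervalIntegral.integral_eq_sub_of_hasDerivAt hderiv (hcont.intervalIntegrable)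

lemma antitone_inv_mul_log {a b : ℝ} (ha : 2 ≤ a) :
    AntitoneOn (fun t : ℝ => (t * Real.log t)⁻¹) (Set.Icc a b) := by
  intro x hx y hy hxy
  simp only
  have hx2 : 2 ≤ x := le_trans ha hx.1
  have hy2 : 2 ≤ y := le_trans ha hy.1
  have hlx : Real.log 2 ≤ Real.log x := Real.log_le_log (by norm_num) hx2
  have hly : Real.log x ≤ Real.log y := Real.log_le_log (by linarith) hxy
  have hlog2 : (0:ℝ) < Real.log 2 := Real.log_pos (by norm_num)
  have h1 : (0:ℝ) < x * Real.log x := by nlinarith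
  have h2 : x * Real.log x ≤ y * Real.log y := by nlinarith
  exact inv_anti₀ h1 h2

lemma sum_inv_n_log_n (N : ℕ) (hN : 2 ≤ N) :
    ∑ n ∈ Finset.Ico 2 N, ((n:ℝ) * Real.log n)⁻¹ ≤
      (2 * Real.log 2)⁻¹ + (Real.log (Real.log N) - Real.log (Real.log 2)) := by
  have hlog2 : (0:ℝ) < Real.log 2 := Real.log_pos (by norm_num)
  have hloglogmono : Real.log (Real.log 2) ≤ Real.log (Real.log N) := by
    apply Real.log_le_log hlog2
    exact Real.log_le_log (by norm_num) (by exact_mod_cast hN)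
  rcases Nat.eq_or_lt_of_le hN with h | h
  · rw [← h]
    simp only [Finset.Ico_self, Finset.sum_empty, Nat.cast_ofNat, sub_self, add_zero]
    positivity
  -- N ≥ 3
  have hN3 : 3 ≤ N := h
  have hsplit : ∑ n ∈ Finset.Ico 2 N, ((n:ℝ) * Real.log n)⁻¹ =
      ((2:ℝ) * Real.log 2)⁻¹ + ∑ n ∈ Finset.Ico 3 N, ((n:ℝ) * Real.log n)⁻¹ := by
    rw [Finset.sum_eq_sum_Ico_succ_bot (by omega : 2 < N)]
    norm_num
  rw [hsplit]
  have hre : ∑ n ∈ Finset.Ico 3 N, ((n:ℝ) * Real.log n)⁻¹ =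
      ∑ i ∈ Finset.Ico 2 (N-1), ((((i+1):ℕ):ℝ) * Real.log ((i+1):ℕ))⁻¹ := by
    rw [Finset.sum_Ico_eq_sum_range, Finset.sum_Ico_eq_sum_range]
    have : N - 3 = N - 1 - 2 := by omega
    rw [← this]
    refine Finset.sum_congr rfl fun i _ => ?_
    congr 2 <;> push_cast <;> ring_nf
  rw [hre]
  have hab : (2:ℕ) ≤ N - 1 := by omega
  have hanti : AntitoneOn (fun t : ℝ => (t * Real.log t)⁻¹)
      (Set.Icc ((2:ℕ):ℝ) ((N-1:ℕ):ℝ)) := by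
    exact antitone_inv_mul_log (by norm_num)
  have hint := AntitoneOn.sum_le_integral_Ico (by exact_mod_cast hab) hanti
  calc ((2:ℝ) * Real.log 2)⁻¹ + ∑ i ∈ Finset.Ico 2 (N-1), ((((i+1):ℕ):ℝ) * Real.log ((i+1):ℕ))⁻¹
      ≤ ((2:ℝ) * Real.log 2)⁻¹ + ∫ t in ((2:ℕ):ℝ)..((N-1:ℕ):ℝ), (t * Real.log t)⁻¹ := by
        exact add_le_add le_rfl hint
    _ ≤ (2 * Real.log 2)⁻¹ + (Real.log (Real.log N) - Real.log (Real.log 2)) := by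
        have h2 : ((2:ℕ):ℝ) = (2:ℝ) := by norm_num
        have hNm1 : (2:ℝ) ≤ ((N-1:ℕ):ℝ) := by exact_mod_cast hab
        rw [h2, integral_inv_mul_log _ hNm1]
        have : Real.log (Real.log ((N-1:ℕ):ℝ)) ≤ Real.log (Real.log N) := by
          apply Real.log_le_log (Real.log_pos (by linarith))
          apply Real.log_le_log (by linarith)
          have : ((N-1:ℕ):ℝ) ≤ (N:ℝ) := by
            have : (N:ℝ) - 1 ≤ N := by linarith
            calc ((N-1:ℕ):ℝ) = (N:ℝ) - 1 := by
                  have : 1 ≤ N := by omega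
                  push_cast [Nat.cast_sub this]
                  ring
              _ ≤ N := by linarith
          exact this
        linarith

lemma sum_filter_prime_eq (n : ℕ) (hn : 1 ≤ n) (h : ℕ → ℝ) (h0 : ¬ Nat.Prime 0 → h 0 = h 0) :
    ∑ p ∈ Nat.primesBelow (n+1), h p = ∑ m ∈ Finset.Icc 2 n, (if m.Prime then h m else 0) := by
  have e1 : Nat.primesBelow (n+1) = (Finset.range (n+1)).filter Nat.Prime := rfl
  rw [e1, Finset.sum_filter]
  rw [Finset.range_eq_Ico]
  rw [← Finset.sum_Ico_consecutive (fun m => if m.Prime then h m else 0)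
    (by omega : (0:ℕ) ≤ 2) (by omega : 2 ≤ n+1)]
  have e2 : ∑ m ∈ Finset.Ico 0 2, (if m.Prime then h m else 0) = 0 := by
    have : Finset.Ico 0 2 = {0, 1} := by decide
    rw [this]
    simp [Nat.not_prime_zero, Nat.not_prime_one]
  rw [e2, zero_add, Finset.Ico_add_one_right_eq_Icc]

lemma prime_recip_bound (N : ℕ) (hN : 2 ≤ N) :
    ∑ p ∈ Nat.primesBelow (N+1), ((p:ℝ))⁻¹ ≤ Real.log (Real.log N) + 11 := by
  have hlog2 : (0:ℝ) < Real.log 2 := Real.log_pos (by norm_num)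
  have hlog2' : (0.6931471803:ℝ) < Real.log 2 := Real.log_two_gt_d9
  set a : ℕ → ℝ := fun n => if n.Prime then Real.log n / n else 0 with ha
  set b : ℕ → ℝ := fun n => (Real.log n)⁻¹ with hb
  have hbpos : ∀ n : ℕ, 2 ≤ n → 0 < b n := by
    intro n hn
    have : (0:ℝ) < Real.log n := Real.log_pos (by exact_mod_cast hn)
    positivity
  have hbmono : ∀ n : ℕ, 2 ≤ n → b (n+1) ≤ b n := by
    intro n hn
    have h1 : (0:ℝ) < Real.log n := Real.log_pos (by exact_mod_cast hn)
    have h2 : Real.log (n:ℝ) ≤ Real.log ((n+1 : ℕ):ℝ) :=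
      Real.log_le_log (by positivity) (by exact_mod_cast Nat.le_succ n)
    exact inv_anti₀ h1 h2
  -- partial sums bound
  have hS : ∀ n : ℕ, 2 ≤ n → ∑ m ∈ Finset.Icc 2 n, a m ≤ Real.log n + 3 := by
    intro n hn
    have := mertens_first n hn
    rw [sum_filter_prime_eq n (by omega) (fun p => Real.log p / p) (fun _ => rfl)] at this
    have hlog4 : Real.log 4 ≤ 3 := by
      have := Real.log_le_sub_one_of_pos (show (0:ℝ) < 4 by norm_num)
      linarith
    calc ∑ m ∈ Finset.Icc 2 n, a m = ∑ m ∈ Finset.Icc 2 n, (if m.Prime then Real.log m / m else 0) := rfl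
      _ ≤ Real.log n + Real.log 4 := this
      _ ≤ Real.log n + 3 := by linarith
  -- express the prime sum via a * b
  have hps : ∑ p ∈ Nat.primesBelow (N+1), ((p:ℝ))⁻¹ = ∑ n ∈ Finset.Icc 2 N, a n * b n := by
    rw [sum_filter_prime_eq N (by omega) (fun p => ((p:ℝ))⁻¹) (fun _ => rfl)]
    refine Finset.sum_congr rfl fun n hn => ?_
    rw [Finset.mem_Icc] at hn
    have hln : (0:ℝ) < Real.log n := Real.log_pos (by exact_mod_cast hn.1)
    by_cases hp : n.Prime
    · simp only [ha, hb, if_pos hp]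
      rw [div_mul_eq_mul_div, mul_inv_cancel₀ hln.ne', one_div]
    · simp only [ha, hb, if_neg hp]
      ring
  rw [hps, abel_identity a b N hN]
  -- bound the two pieces
  have hterm1 : (∑ m ∈ Finset.Icc 2 N, a m) * b N ≤ 1 + 3 * (Real.log 2)⁻¹ := by
    have h1 := hS N hN
    have h2 : 0 < b N := hbpos N hN
    have hlogN : Real.log 2 ≤ Real.log N := Real.log_le_log (by norm_num) (by exact_mod_cast hN)
    calc (∑ m ∈ Finset.Icc 2 N, a m) * b N ≤ (Real.log N + 3) * b N :=
          mul_le_mul_of_nonneg_right h1 h2.le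
      _ = 1 + 3 * (Real.log N)⁻¹ := by
          simp only [hb]
          have h3 : Real.log (N:ℝ) ≠ 0 := ne_of_gt (lt_of_lt_of_le hlog2 hlogN)
          field_simp
      _ ≤ 1 + 3 * (Real.log 2)⁻¹ := by
          have : (Real.log N)⁻¹ ≤ (Real.log 2)⁻¹ := inv_anti₀ hlog2 hlogN
          linarith
  have hterm2 : ∑ n ∈ Finset.Ico 2 N, (∑ m ∈ Finset.Icc 2 n, a m) * (b n - b (n+1)) ≤
      ∑ n ∈ Finset.Ico 2 N, ((Real.log n) * (b n - b (n+1)) + 3 * (b n - b (n+1))) := by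
    refine Finset.sum_le_sum fun n hn => ?_
    rw [Finset.mem_Ico] at hn
    have hdiff : 0 ≤ b n - b (n+1) := by linarith [hbmono n hn.1]
    calc (∑ m ∈ Finset.Icc 2 n, a m) * (b n - b (n+1))
        ≤ (Real.log n + 3) * (b n - b (n+1)) := mul_le_mul_of_nonneg_right (hS n hn.1) hdiff
      _ = (Real.log n) * (b n - b (n+1)) + 3 * (b n - b (n+1)) := by ring
  have htel : ∑ n ∈ Finset.Ico 2 N, (b n - b (n+1)) = b 2 - b N := by
    rw [Finset.sum_Ico_eq_sum_range]
    calc ∑ i ∈ Finset.range (N - 2), (b (2 + i) - b (2 + i + 1))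
        = ∑ i ∈ Finset.range (N - 2), ((fun j => b (2+j)) i - (fun j => b (2+j)) (i+1)) :=
          Finset.sum_congr rfl fun i _ => rfl
      _ = b 2 - b (2 + (N - 2)) := Finset.sum_range_sub' (fun j => b (2+j)) (N-2)
      _ = b 2 - b N := by
          have h2 : 2 + (N - 2) = N := by omega
          rw [h2]
  have hmain : ∑ n ∈ Finset.Ico 2 N, (Real.log n) * (b n - b (n+1)) ≤
      (2 * Real.log 2)⁻¹ + (Real.log (Real.log N) - Real.log (Real.log 2)) := by
    have hptwise : ∀ n ∈ Finset.Ico 2 N, (Real.log n) * (b n - b (n+1)) ≤ ((n:ℝ) * Real.log n)⁻¹ := by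
      intro n hn
      rw [Finset.mem_Ico] at hn
      have hn2 : 2 ≤ n := hn.1
      have hln : (0:ℝ) < Real.log n := Real.log_pos (by exact_mod_cast hn2)
      have hnn : (0:ℝ) < n := by exact_mod_cast (by omega : 0 < n)
      have hln1 : (0:ℝ) < Real.log ((n:ℝ)+1) := Real.log_pos (by linarith)
      have hstep : Real.log ((n:ℝ)+1) - Real.log n ≤ (n:ℝ)⁻¹ := by
        have hx : (0:ℝ) < ((n:ℝ)+1)/n := by positivity
        have := Real.log_le_sub_one_of_pos hx
        rw [Real.log_div (by positivity) (by positivity)] at this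
        have : Real.log ((n:ℝ)+1) - Real.log n ≤ ((n:ℝ)+1)/n - 1 := this
        have he : ((n:ℝ)+1)/n - 1 = (n:ℝ)⁻¹ := by field_simp; ring
        linarith [he ▸ this]
      have hexp : (Real.log n) * (b n - b (n+1)) =
          (Real.log ((n:ℝ)+1) - Real.log n) / Real.log ((n:ℝ)+1) := by
        simp only [hb]
        have hcast : ((n+1 : ℕ):ℝ) = (n:ℝ)+1 := by push_cast; ring
        rw [hcast]
        field_simp
      rw [hexp]
      calc (Real.log ((n:ℝ)+1) - Real.log n) / Real.log ((n:ℝ)+1)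
          ≤ (n:ℝ)⁻¹ / Real.log n :=
            div_le_div₀ (by positivity) hstep hln
              (Real.log_le_log (by positivity) (by linarith))
        _ = ((n:ℝ) * Real.log n)⁻¹ := by rw [mul_inv, div_eq_mul_inv]
    calc ∑ n ∈ Finset.Ico 2 N, (Real.log n) * (b n - b (n+1))
        ≤ ∑ n ∈ Finset.Ico 2 N, ((n:ℝ) * Real.log n)⁻¹ := Finset.sum_le_sum hptwise
      _ ≤ (2 * Real.log 2)⁻¹ + (Real.log (Real.log N) - Real.log (Real.log 2)) :=
          sum_inv_n_log_n N hN
  -- assemble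
  have hb2 : b 2 = (Real.log 2)⁻¹ := by simp [hb]
  have hbN : 0 < b N := hbpos N hN
  have hloglog2 : -Real.log (Real.log 2) ≤ (Real.log 2)⁻¹ - 1 := by
    have h := Real.log_le_sub_one_of_pos (show (0:ℝ) < (Real.log 2)⁻¹ by positivity)
    rw [Real.log_inv] at h
    linarith
  have hsum2 : ∑ n ∈ Finset.Ico 2 N, (Real.log n * (b n - b (n+1)) + 3 * (b n - b (n+1)))
      = ∑ n ∈ Finset.Ico 2 N, Real.log n * (b n - b (n+1)) + 3 * (b 2 - b N) := by
    rw [Finset.sum_add_distrib, ← Finset.mul_sum, htel]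
  have hfin : 3 * (b 2 - b N) ≤ 3 * (Real.log 2)⁻¹ := by
    rw [hb2]
    nlinarith [hbN]
  have hinv2 : (Real.log 2)⁻¹ ≤ 1.443 := by
    rw [inv_le_comm₀ ((by linarith) : (0:ℝ) < Real.log 2) (by norm_num)]
    linarith
  calc (∑ m ∈ Finset.Icc 2 N, a m) * b N +
        ∑ n ∈ Finset.Ico 2 N, (∑ m ∈ Finset.Icc 2 n, a m) * (b n - b (n+1))
      ≤ (1 + 3 * (Real.log 2)⁻¹) +
        (∑ n ∈ Finset.Ico 2 N, Real.log n * (b n - b (n+1)) + 3 * (Real.log 2)⁻¹) := by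
        have := hterm2.trans_eq hsum2
        linarith [hterm1, this, hfin]
    _ ≤ (1 + 3 * (Real.log 2)⁻¹) + ((2 * Real.log 2)⁻¹ +
        (Real.log (Real.log N) - Real.log (Real.log 2)) + 3 * (Real.log 2)⁻¹) := by
        linarith [hmain]
    _ ≤ Real.log (Real.log N) + 11 := by
        have h2 : (2 * Real.log 2)⁻¹ = (Real.log 2)⁻¹ / 2 := by
          rw [mul_inv]; ring
        rw [h2]
        nlinarith [hinv2, hloglog2, hlog2]

lemma sum_inv_sq_le (M : ℕ) : ∑ n ∈ Finset.Icc 2 M, (((n:ℝ))^2)⁻¹ ≤ 1 := by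
  have key : ∀ M : ℕ, 1 ≤ M → ∑ n ∈ Finset.Icc 2 M, (((n:ℝ))^2)⁻¹ ≤ 1 - (M:ℝ)⁻¹ := by
    intro M hM
    induction M, hM using Nat.le_induction with
    | base => simp
    | succ M hM ih =>
      rw [Finset.sum_Icc_succ_top (by omega : 2 ≤ M + 1)]
      have hM0 : (0:ℝ) < M := by exact_mod_cast hM
      have hM1 : (0:ℝ) < (M:ℝ) + 1 := by linarith
      have hcast : ((M + 1 : ℕ):ℝ) = (M:ℝ) + 1 := by push_cast; ring
      rw [hcast]
      have hle : (((M:ℝ) + 1)^2)⁻¹ ≤ (M:ℝ)⁻¹ - ((M:ℝ)+1)⁻¹ := by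
        have he : (M:ℝ)⁻¹ - ((M:ℝ)+1)⁻¹ = ((M:ℝ)*((M:ℝ)+1))⁻¹ := by
          field_simp
          ring
        rw [he]
        apply inv_anti₀ (by positivity)
        nlinarith
      linarith [ih]
  rcases Nat.lt_or_ge M 2 with h | h
  · have : Finset.Icc 2 M = ∅ := by
      apply Finset.Icc_eq_empty; omega
    simp [this]
  · have h1 := key M (by omega)
    have : (0:ℝ) < (M:ℝ)⁻¹ := by
      have : (0:ℝ) < M := by exact_mod_cast (by omega : 0 < M)
      positivity
    linarith

lemma euler_prod_bound (w : ℝ) (hw : 2 ≤ w) :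
    ∏ p ∈ Nat.primesBelow (Nat.floor w + 1), (1 - ((p:ℝ))⁻¹)⁻¹ ≤ Real.exp 13 * Real.log w := by
  set N := Nat.floor w with hN
  have hN2 : 2 ≤ N := Nat.le_floor (by exact_mod_cast hw)
  have hNw : (N:ℝ) ≤ w := Nat.floor_le (by linarith)
  have hN2R : (2:ℝ) ≤ (N:ℝ) := by exact_mod_cast hN2
  set P := Nat.primesBelow (N+1) with hP
  have hprime : ∀ p ∈ P, p.Prime := fun p hp => Nat.prime_of_mem_primesBelow hp
  have hplarge : ∀ p ∈ P, (2:ℝ) ≤ (p:ℝ) := fun p hp => by exact_mod_cast (hprime p hp).two_le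
  have hfactor_pos : ∀ p ∈ P, (0:ℝ) < (1 - ((p:ℝ))⁻¹)⁻¹ := by
    intro p hp
    have h2 := hplarge p hp
    have : ((p:ℝ))⁻¹ ≤ 1/2 := by
      rw [inv_le_comm₀ (by linarith) (by norm_num)]
      linarith
    have : (0:ℝ) < 1 - ((p:ℝ))⁻¹ := by linarith
    positivity
  -- log of each factor
  have hlogfactor : ∀ p ∈ P, Real.log ((1 - ((p:ℝ))⁻¹)⁻¹) ≤ ((p:ℝ))⁻¹ + 2 * (((p:ℝ))^2)⁻¹ := by
    intro p hp
    have h2 := hplarge p hp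
    have hp0 : (0:ℝ) < p := by linarith
    have hinv : ((p:ℝ))⁻¹ ≤ 1/2 := by
      rw [inv_le_comm₀ (by linarith) (by norm_num)]
      linarith
    have hpos : (0:ℝ) < 1 - ((p:ℝ))⁻¹ := by linarith
    have heq : (1 - ((p:ℝ))⁻¹)⁻¹ = (p:ℝ)/((p:ℝ)-1) := by
      field_simp
    have h3 := Real.log_le_sub_one_of_pos (show (0:ℝ) < (1 - ((p:ℝ))⁻¹)⁻¹ by positivity)
    have h4 : (1 - ((p:ℝ))⁻¹)⁻¹ - 1 = ((p:ℝ)-1)⁻¹ := by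
      rw [heq]
      rw [div_sub_one (by linarith : (p:ℝ) - 1 ≠ 0), inv_eq_one_div]
      congr 1
      ring
    have h5 : ((p:ℝ)-1)⁻¹ ≤ ((p:ℝ))⁻¹ + 2 * (((p:ℝ))^2)⁻¹ := by
      rw [inv_le_comm₀ (by linarith) (by positivity)]
      have hh : (((p:ℝ))⁻¹ + 2 * (((p:ℝ))^2)⁻¹)⁻¹ = (p:ℝ)^2/((p:ℝ) + 2) := by
        field_simp
      rw [hh]
      rw [div_le_iff₀ (by linarith)]
      nlinarith
    linarith
  -- sum of 1/p^2
  have hsq : ∑ p ∈ P, (((p:ℝ))^2)⁻¹ ≤ 1 := by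
    have hsub : P ⊆ Finset.Icc 2 (N+1) := by
      intro p hp
      rw [Finset.mem_Icc]
      exact ⟨(hprime p hp).two_le, (Nat.lt_of_mem_primesBelow hp).le⟩
    calc ∑ p ∈ P, (((p:ℝ))^2)⁻¹ ≤ ∑ n ∈ Finset.Icc 2 (N+1), (((n:ℝ))^2)⁻¹ := by
          apply Finset.sum_le_sum_of_subset_of_nonneg hsub
          intro n hn _
          positivity
      _ ≤ 1 := sum_inv_sq_le (N+1)
  -- total log sum
  have hlogsum : ∑ p ∈ P, Real.log ((1 - ((p:ℝ))⁻¹)⁻¹) ≤ Real.log (Real.log N) + 13 := by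
    calc ∑ p ∈ P, Real.log ((1 - ((p:ℝ))⁻¹)⁻¹)
        ≤ ∑ p ∈ P, (((p:ℝ))⁻¹ + 2 * (((p:ℝ))^2)⁻¹) := Finset.sum_le_sum hlogfactor
      _ = ∑ p ∈ P, ((p:ℝ))⁻¹ + 2 * ∑ p ∈ P, (((p:ℝ))^2)⁻¹ := by
          rw [Finset.sum_add_distrib, Finset.mul_sum]
      _ ≤ (Real.log (Real.log N) + 11) + 2 * 1 := by
          have h1 := prime_recip_bound N hN2
          have h2 : (0:ℝ) ≤ ∑ p ∈ P, (((p:ℝ))^2)⁻¹ :=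
            Finset.sum_nonneg fun p hp => by positivity
          nlinarith [hsq]
      _ = Real.log (Real.log N) + 13 := by ring
  -- conclude
  have hprod : ∏ p ∈ P, (1 - ((p:ℝ))⁻¹)⁻¹ = Real.exp (∑ p ∈ P, Real.log ((1 - ((p:ℝ))⁻¹)⁻¹)) := by
    rw [Real.exp_sum]
    exact (Finset.prod_congr rfl fun p hp => (Real.exp_log (hfactor_pos p hp)).symm)
  rw [hprod]
  have hlogN : (0:ℝ) < Real.log N := Real.log_pos (by linarith)
  calc Real.exp (∑ p ∈ P, Real.log ((1 - ((p:ℝ))⁻¹)⁻¹))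
      ≤ Real.exp (Real.log (Real.log N) + 13) := Real.exp_le_exp.2 hlogsum
    _ = Real.exp 13 * Real.log N := by
        rw [Real.exp_add, Real.exp_log hlogN]
        ring
    _ ≤ Real.exp 13 * Real.log w := by
        have : Real.log (N:ℝ) ≤ Real.log w := Real.log_le_log (by linarith) hNw
        nlinarith [Real.exp_pos (13:ℝ)]

noncomputable def invHom : ℕ →* ℝ where
  toFun n := ((n:ℝ))⁻¹
  map_one' := by norm_num
  map_mul' m n := by push_cast; rw [mul_inv]

lemma smooth_sum_le_prod (M : ℕ) (F : Finset ℕ) (hF : ∀ d ∈ F, d ∈ Nat.smoothNumbers M) :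
    ∑ d ∈ F, ((d:ℝ))⁻¹ ≤ ∏ p ∈ Nat.primesBelow M, (1 - ((p:ℝ))⁻¹)⁻¹ := by
  have hlt : ∀ {p : ℕ}, p.Prime → ‖invHom p‖ < 1 := by
    intro p hp
    have h2 : (2:ℝ) ≤ p := by exact_mod_cast hp.two_le
    rw [invHom]
    simp only [MonoidHom.coe_mk, OneHom.coe_mk, Real.norm_eq_abs]
    rw [abs_of_nonneg (by positivity)]
    rw [inv_lt_comm₀ (by linarith) (by norm_num)]
    linarith
  obtain ⟨hsummable, hhassum⟩ :=
    EulerProduct.summable_and_hasSum_smoothNumbers_prod_primesBelow_geometric (f := invHom) hlt M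
  have hprod : ∑' m : M.smoothNumbers, invHom m = ∏ p ∈ Nat.primesBelow M, (1 - invHom p)⁻¹ :=
    hhassum.tsum_eq
  -- embed F into the subtype
  set T : Finset (M.smoothNumbers) :=
    F.attach.map ⟨fun d => ⟨d.1, hF d.1 d.2⟩, by
      intro x y hxy
      simp only [Subtype.mk.injEq] at hxy
      exact Subtype.ext hxy⟩ with hT
  have hsum_eq : ∑ m ∈ T, invHom m = ∑ d ∈ F, ((d:ℝ))⁻¹ := by
    rw [hT, Finset.sum_map]
    show ∑ x ∈ F.attach, invHom (x : ℕ) = _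
    rw [Finset.sum_attach F (fun d => invHom d)]
    rfl
  have hle : ∑ m ∈ T, invHom m ≤ ∑' m : M.smoothNumbers, invHom m := by
    apply Summable.sum_le_tsum T
    · intro m _
      have : (0:ℝ) ≤ ((m:ℕ):ℝ)⁻¹ := by positivity
      exact this
    · exact hhassum.summable
  calc ∑ d ∈ F, ((d:ℝ))⁻¹ = ∑ m ∈ T, invHom m := hsum_eq.symm
    _ ≤ ∑' m : M.smoothNumbers, invHom m := hle
    _ = ∏ p ∈ Nat.primesBelow M, (1 - invHom p)⁻¹ := hprod
    _ = ∏ p ∈ Nat.primesBelow M, (1 - ((p:ℝ))⁻¹)⁻¹ := rfl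

/-- `∑_{Q < q, q' ≤ 2Q, p ∣ q} gcd(q_s, q_s')/(q q') ≪ (log w)/p`, where `q_s, q_s'`
are the `w`-smooth parts of `q, q'` and `p` is prime, with an absolute implied constant. -/

theorem smooth_gcd_pairs_bound :
    ∃ C : ℝ, 0 < C ∧ ∀ (w : ℝ), 2 ≤ w → ∀ (Q : ℕ), 2 ≤ Q → ∀ (p : ℕ), p.Prime →
      ∑ q ∈ (Finset.Ioc Q (2 * Q)).filter (fun q => p ∣ q), ∑ q' ∈ Finset.Ioc Q (2 * Q),
        ((Nat.gcd (smoothPart w q) (smoothPart w q') : ℝ) / ((q : ℝ) * (q' : ℝ))) ≤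
      C * Real.log w / (p : ℝ) := by
  refine ⟨2 * Real.exp 13, by positivity, ?_⟩
  intro w hw Q hQ p hp
  set I := Finset.Ioc Q (2 * Q) with hI
  set Fp := I.filter (fun q => p ∣ q) with hFp
  set Sm : ℕ → Prop := fun d => ∀ r ∈ d.primeFactors, (r : ℝ) ≤ w with hSm
  have hSmDec : DecidablePred Sm := fun d => by
    rw [hSm]; infer_instance
  set E := (Finset.Icc 1 (2*Q)).filter Sm with hE
  have hQ1 : 1 ≤ Q := by omega
  have hqne : ∀ q ∈ I, q ≠ 0 := by
    intro q hq
    rw [hI, Finset.mem_Ioc] at hq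
    omega
  have hqle : ∀ q ∈ I, q ≤ 2*Q := by
    intro q hq
    rw [hI, Finset.mem_Ioc] at hq
    omega
  have hqposR : ∀ q ∈ I, (0:ℝ) < q := by
    intro q hq
    have := hqne q hq
    exact_mod_cast Nat.pos_of_ne_zero this
  -- Step 1: rewrite the double sum
  have step1 : ∑ q ∈ Fp, ∑ q' ∈ I,
      ((Nat.gcd (smoothPart w q) (smoothPart w q') : ℝ) / ((q : ℝ) * (q' : ℝ)))
      = ∑ d ∈ Finset.Icc 1 (2*Q), ∑ q ∈ Fp, ∑ q' ∈ I,
        (if (d ∣ q ∧ d ∣ q') ∧ Sm d then (Nat.totient d : ℝ) * (q:ℝ)⁻¹ * (q':ℝ)⁻¹ else 0) := by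
    calc ∑ q ∈ Fp, ∑ q' ∈ I,
        ((Nat.gcd (smoothPart w q) (smoothPart w q') : ℝ) / ((q : ℝ) * (q' : ℝ)))
        = ∑ q ∈ Fp, ∑ q' ∈ I, ∑ d ∈ Finset.Icc 1 (2*Q),
          (if (d ∣ q ∧ d ∣ q') ∧ Sm d then (Nat.totient d : ℝ) * (q:ℝ)⁻¹ * (q':ℝ)⁻¹ else 0) := by
          refine Finset.sum_congr rfl fun q hq => Finset.sum_congr rfl fun q' hq' => ?_
          have hqI : q ∈ I := Finset.mem_of_mem_filter q hq
          rw [gcd_smoothPart_eq_sum w (hqne q hqI) (hqne q' hq') (hqle q hqI)]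
          rw [Nat.cast_sum, Finset.sum_div, Finset.sum_filter]
          refine Finset.sum_congr rfl fun d hd => ?_
          by_cases hcond : (d ∣ q ∧ d ∣ q') ∧ Sm d
          · rw [if_pos hcond, if_pos hcond]
            rw [div_eq_mul_inv, mul_inv]
            ring
          · rw [if_neg hcond, if_neg hcond]
      _ = ∑ q ∈ Fp, ∑ d ∈ Finset.Icc 1 (2*Q), ∑ q' ∈ I,
          (if (d ∣ q ∧ d ∣ q') ∧ Sm d then (Nat.totient d : ℝ) * (q:ℝ)⁻¹ * (q':ℝ)⁻¹ else 0) :=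
          Finset.sum_congr rfl fun q _ => Finset.sum_comm
      _ = ∑ d ∈ Finset.Icc 1 (2*Q), ∑ q ∈ Fp, ∑ q' ∈ I,
          (if (d ∣ q ∧ d ∣ q') ∧ Sm d then (Nat.totient d : ℝ) * (q:ℝ)⁻¹ * (q':ℝ)⁻¹ else 0) :=
          Finset.sum_comm
  rw [step1]
  -- Step 2: per-d bound
  have step2 : ∀ d ∈ Finset.Icc 1 (2*Q),
      (∑ q ∈ Fp, ∑ q' ∈ I,
        (if (d ∣ q ∧ d ∣ q') ∧ Sm d then (Nat.totient d : ℝ) * (q:ℝ)⁻¹ * (q':ℝ)⁻¹ else 0))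
      ≤ (if Sm d then ((Nat.lcm p d : ℝ))⁻¹ else 0) := by
    intro d hd
    rw [Finset.mem_Icc] at hd
    have hd1 : 1 ≤ d := hd.1
    have hdp0 : (0:ℝ) < d := by exact_mod_cast hd1
    by_cases hsm : Sm d
    · rw [if_pos hsm]
      have hlcm1 : 1 ≤ Nat.lcm p d :=
        Nat.pos_of_ne_zero (Nat.lcm_ne_zero (Nat.Prime.ne_zero hp) (by omega))
      have heq : ∑ q ∈ Fp, ∑ q' ∈ I,
          (if (d ∣ q ∧ d ∣ q') ∧ Sm d then (Nat.totient d : ℝ) * (q:ℝ)⁻¹ * (q':ℝ)⁻¹ else 0)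
          = (Nat.totient d : ℝ) * (∑ q ∈ Fp.filter (fun q => d ∣ q), (q:ℝ)⁻¹)
            * (∑ q' ∈ I.filter (fun q' => d ∣ q'), (q':ℝ)⁻¹) := by
        have hRHS : (Nat.totient d : ℝ) * (∑ q ∈ Fp.filter (fun q => d ∣ q), (q:ℝ)⁻¹)
            * (∑ q' ∈ I.filter (fun q' => d ∣ q'), (q':ℝ)⁻¹)
            = ∑ q ∈ Fp.filter (fun q => d ∣ q), ∑ q' ∈ I.filter (fun q' => d ∣ q'),
              (Nat.totient d : ℝ) * (q:ℝ)⁻¹ * (q':ℝ)⁻¹ := by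
          rw [mul_assoc, Finset.sum_mul_sum, Finset.mul_sum]
          refine Finset.sum_congr rfl fun q _ => ?_
          rw [Finset.mul_sum]
          refine Finset.sum_congr rfl fun q' _ => by ring
        rw [hRHS]
        calc ∑ q ∈ Fp, ∑ q' ∈ I,
            (if (d ∣ q ∧ d ∣ q') ∧ Sm d then (Nat.totient d : ℝ) * (q:ℝ)⁻¹ * (q':ℝ)⁻¹ else 0)
            = ∑ q ∈ Fp, (if d ∣ q then ∑ q' ∈ I,
                (if d ∣ q' then (Nat.totient d : ℝ) * (q:ℝ)⁻¹ * (q':ℝ)⁻¹ else 0) else 0) := by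
              refine Finset.sum_congr rfl fun q _ => ?_
              by_cases hdq : d ∣ q
              · rw [if_pos hdq]
                refine Finset.sum_congr rfl fun q' _ => ?_
                by_cases hdq' : d ∣ q'
                · rw [if_pos ⟨⟨hdq, hdq'⟩, hsm⟩, if_pos hdq']
                · rw [if_neg (by tauto), if_neg hdq']
              · rw [if_neg hdq]
                exact Finset.sum_eq_zero fun q' _ => if_neg (by tauto)
          _ = ∑ q ∈ Fp.filter (fun q => d ∣ q), ∑ q' ∈ I,
                (if d ∣ q' then (Nat.totient d : ℝ) * (q:ℝ)⁻¹ * (q':ℝ)⁻¹ else 0) :=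
              (Finset.sum_filter _ _).symm
          _ = ∑ q ∈ Fp.filter (fun q => d ∣ q), ∑ q' ∈ I.filter (fun q' => d ∣ q'),
                (Nat.totient d : ℝ) * (q:ℝ)⁻¹ * (q':ℝ)⁻¹ :=
              Finset.sum_congr rfl fun q _ => (Finset.sum_filter _ _).symm
      rw [heq]
      -- bound the two inner sums
      have hA : ∑ q ∈ Fp.filter (fun q => d ∣ q), (q:ℝ)⁻¹ ≤ ((Nat.lcm p d : ℝ))⁻¹ := by
        have hset : Fp.filter (fun q => d ∣ q) = I.filter (fun q => Nat.lcm p d ∣ q) := by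
          rw [hFp, Finset.filter_filter]
          refine Finset.filter_congr fun q _ => ?_
          constructor
          · rintro ⟨h1, h2⟩; exact Nat.lcm_dvd h1 h2
          · intro h
            exact ⟨(Nat.dvd_lcm_left p d).trans h, (Nat.dvd_lcm_right p d).trans h⟩
        rw [hset]
        exact sum_inv_multiples_le Q (Nat.lcm p d) hQ1 hlcm1
      have hB : ∑ q' ∈ I.filter (fun q' => d ∣ q'), (q':ℝ)⁻¹ ≤ ((d : ℝ))⁻¹ :=
        sum_inv_multiples_le Q d hQ1 hd1
      have hAnn : (0:ℝ) ≤ ∑ q ∈ Fp.filter (fun q => d ∣ q), (q:ℝ)⁻¹ :=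
        Finset.sum_nonneg fun q hq => by positivity
      have hBnn : (0:ℝ) ≤ ∑ q' ∈ I.filter (fun q' => d ∣ q'), (q':ℝ)⁻¹ :=
        Finset.sum_nonneg fun q hq => by positivity
      have htot : (Nat.totient d : ℝ) ≤ (d : ℝ) := by exact_mod_cast Nat.totient_le d
      have htotnn : (0:ℝ) ≤ (Nat.totient d : ℝ) := by positivity
      have hlcmpos : (0:ℝ) < (Nat.lcm p d : ℝ) := by exact_mod_cast hlcm1
      calc (Nat.totient d : ℝ) * (∑ q ∈ Fp.filter (fun q => d ∣ q), (q:ℝ)⁻¹)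
            * (∑ q' ∈ I.filter (fun q' => d ∣ q'), (q':ℝ)⁻¹)
          ≤ (d:ℝ) * ((Nat.lcm p d : ℝ))⁻¹ * ((d : ℝ))⁻¹ := by
            apply mul_le_mul
            · exact mul_le_mul htot hA hAnn (by positivity)
            · exact hB
            · exact hBnn
            · positivity
        _ = ((Nat.lcm p d : ℝ))⁻¹ := by
            field_simp
    · rw [if_neg hsm]
      apply le_of_eq
      refine Finset.sum_eq_zero fun q _ => Finset.sum_eq_zero fun q' _ => ?_
      rw [if_neg (by tauto)]
  -- Step 3: sum the per-d bounds
  have step3 : ∑ d ∈ Finset.Icc 1 (2*Q), (if Sm d then ((Nat.lcm p d : ℝ))⁻¹ else 0)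
      = ∑ d ∈ E, ((Nat.lcm p d : ℝ))⁻¹ := by
    rw [hE, Finset.sum_filter]
  -- Step 4: split by divisibility by p, bound by 2 * U / p
  set U := ∑ d ∈ E, ((d:ℝ))⁻¹ with hU
  have hppos : (0:ℝ) < p := by exact_mod_cast hp.pos
  have hDsmooth : ∀ d ∈ E, Sm d := fun d hd => (Finset.mem_filter.1 hd).2
  have hDrange : ∀ d ∈ E, 1 ≤ d ∧ d ≤ 2*Q := by
    intro d hd
    have := (Finset.mem_filter.1 hd).1
    rw [Finset.mem_Icc] at this
    exact this
  have step4 : ∑ d ∈ E, ((Nat.lcm p d : ℝ))⁻¹ ≤ 2 * U / p := by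
    rw [← Finset.sum_filter_add_sum_filter_not E (fun d => p ∣ d)]
    have hpart1 : ∑ d ∈ E.filter (fun d => p ∣ d), ((Nat.lcm p d : ℝ))⁻¹ ≤ U / p := by
      have heq1 : ∀ d ∈ E.filter (fun d => p ∣ d),
          ((Nat.lcm p d : ℝ))⁻¹ = (p:ℝ)⁻¹ * (((d / p : ℕ)):ℝ)⁻¹ := by
        intro d hd
        have hpd : p ∣ d := (Finset.mem_filter.1 hd).2
        have hlcm : Nat.lcm p d = d :=
          Nat.dvd_antisymm (Nat.lcm_dvd hpd dvd_rfl) (Nat.dvd_lcm_right p d)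
        rw [hlcm]
        have : (d:ℝ) = (p:ℝ) * (((d / p : ℕ)):ℝ) := by
          exact_mod_cast (Nat.mul_div_cancel' hpd).symm
        rw [this, mul_inv]
      rw [Finset.sum_congr rfl heq1, ← Finset.mul_sum]
      have himg : ∑ d ∈ E.filter (fun d => p ∣ d), (((d / p : ℕ)):ℝ)⁻¹ ≤ U := by
        have hinj : Set.InjOn (· / p) (E.filter (fun d => p ∣ d)) := by
          intro x hx y hy hxy
          simp only [Finset.coe_filter, Set.mem_setOf_eq] at hx hy
          have hxp : p ∣ x := hx.2
          have hyp : p ∣ y := hy.2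
          have := congrArg (· * p) hxy
          simp only at this
          rwa [Nat.div_mul_cancel hxp, Nat.div_mul_cancel hyp] at this
        have himg2 : ∑ e ∈ (E.filter (fun d => p ∣ d)).image (· / p), ((e:ℝ))⁻¹
            = ∑ d ∈ E.filter (fun d => p ∣ d), (((d / p : ℕ)):ℝ)⁻¹ :=
          Finset.sum_image (fun x hx y hy hxy => hinj (by exact_mod_cast hx) (by exact_mod_cast hy) hxy)
        rw [← himg2]
        apply Finset.sum_le_sum_of_subset_of_nonneg
        · intro e he
          rw [Finset.mem_image] at he
          obtain ⟨d, hd, rfl⟩ := he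
          have hdE := Finset.mem_of_mem_filter d hd
          have hpd : p ∣ d := (Finset.mem_filter.1 hd).2
          obtain ⟨hd1, hd2⟩ := hDrange d hdE
          have hd0 : d ≠ 0 := by omega
          rw [hE, Finset.mem_filter, Finset.mem_Icc]
          refine ⟨⟨?_, ?_⟩, ?_⟩
          · exact (Nat.one_le_div_iff hp.pos).2 (Nat.le_of_dvd (by omega) hpd)
          · exact le_trans (Nat.div_le_self d p) hd2
          · intro r hr
            exact hDsmooth d hdE r (Nat.primeFactors_mono (Nat.div_dvd_of_dvd hpd) hd0 hr)
        · intro e _ _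
          positivity
      calc (p:ℝ)⁻¹ * ∑ d ∈ E.filter (fun d => p ∣ d), (((d / p : ℕ)):ℝ)⁻¹
          ≤ (p:ℝ)⁻¹ * U := by
            apply mul_le_mul_of_nonneg_left himg (by positivity)
        _ = U / p := by rw [div_eq_mul_inv]; ring
    have hpart2 : ∑ d ∈ E.filter (fun d => ¬ p ∣ d), ((Nat.lcm p d : ℝ))⁻¹ ≤ U / p := by
      have heq2 : ∀ d ∈ E.filter (fun d => ¬ p ∣ d),
          ((Nat.lcm p d : ℝ))⁻¹ = (p:ℝ)⁻¹ * ((d:ℝ))⁻¹ := by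
        intro d hd
        have hnpd : ¬ p ∣ d := (Finset.mem_filter.1 hd).2
        have hcop : Nat.Coprime p d := (Nat.Prime.coprime_iff_not_dvd hp).2 hnpd
        have hlcm : Nat.lcm p d = p * d := Nat.Coprime.lcm_eq_mul hcop
        rw [hlcm]
        push_cast
        rw [mul_inv]
      rw [Finset.sum_congr rfl heq2, ← Finset.mul_sum]
      have hsub : ∑ d ∈ E.filter (fun d => ¬ p ∣ d), ((d:ℝ))⁻¹ ≤ U := by
        apply Finset.sum_le_sum_of_subset_of_nonneg (Finset.filter_subset _ _)
        intro e _ _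
        positivity
      calc (p:ℝ)⁻¹ * ∑ d ∈ E.filter (fun d => ¬ p ∣ d), ((d:ℝ))⁻¹
          ≤ (p:ℝ)⁻¹ * U := by
            apply mul_le_mul_of_nonneg_left hsub (by positivity)
        _ = U / p := by rw [div_eq_mul_inv]; ring
    have h2U : 2 * U / (p:ℝ) = U / p + U / p := by ring
    rw [h2U]
    exact add_le_add hpart1 hpart2
  -- Step 5: bound U via the Euler product
  have step5 : U ≤ Real.exp 13 * Real.log w := by
    have hF : ∀ d ∈ E, d ∈ Nat.smoothNumbers (Nat.floor w + 1) := by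
      intro d hd
      rw [Nat.mem_smoothNumbers']
      intro r hr hrd
      obtain ⟨hd1, _⟩ := hDrange d hd
      have hrpf : r ∈ d.primeFactors := Nat.mem_primeFactors.2 ⟨hr, hrd, by omega⟩
      have := hDsmooth d hd r hrpf
      have : r ≤ Nat.floor w := (Nat.le_floor_iff (by linarith)).2 this
      omega
    calc U ≤ ∏ p' ∈ Nat.primesBelow (Nat.floor w + 1), (1 - ((p':ℝ))⁻¹)⁻¹ :=
          smooth_sum_le_prod _ E hF
      _ ≤ Real.exp 13 * Real.log w := euler_prod_bound w hw
  -- final assembly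
  calc ∑ d ∈ Finset.Icc 1 (2*Q), ∑ q ∈ Fp, ∑ q' ∈ I,
        (if (d ∣ q ∧ d ∣ q') ∧ Sm d then (Nat.totient d : ℝ) * (q:ℝ)⁻¹ * (q':ℝ)⁻¹ else 0)
      ≤ ∑ d ∈ Finset.Icc 1 (2*Q), (if Sm d then ((Nat.lcm p d : ℝ))⁻¹ else 0) :=
        Finset.sum_le_sum step2
    _ = ∑ d ∈ E, ((Nat.lcm p d : ℝ))⁻¹ := step3
    _ ≤ 2 * U / p := step4
    _ ≤ 2 * Real.exp 13 * Real.log w / (p:ℝ) := by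
        have h1 : 2 * U ≤ 2 * Real.exp 13 * Real.log w := by linarith [step5]
        exact div_le_div_of_nonneg_right h1 hppos.le
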